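/- Let L = L_pure ⊆ ℤⁿ be a pure lattice of rank r with σ = σ_L, and let S be a set of r binomials of I_L. Then S generates I_L if and only if there is a rearrangement {x^{u₁} − x^{v₁}, …, x^{u_r} − x^{v_r}} of S (i.e., an enumeration of S up to sign) such that: (1) {u₁ − v₁, …, u_r − v_r} is a ℤ-basis of L; (2) supp(u_i) ∪ supp(v_i) ⊆ σ for all i ∈ [r]; (3) v₁ = 0 and supp(v_i) ⊆ ⋃_{j=1}^{i−1} supp(u_j) for 2 ≤ i ≤ r. -/

import Mathlib

open MvPolynomial

noncomputable section

/-- The integer vector associated to a natural exponent vector. -/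
def natVec {ι : Type*} (u : ι →₀ ℕ) : ι → ℤ := fun i => (u i : ℤ)

/-- The lattice ideal `I_L` of a lattice `L ⊆ ℤ^ι` in `k[x_i : i ∈ ι]`. -/
def latticeIdeal (k : Type*) [Field k] {ι : Type*} (L : Submodule ℤ (ι → ℤ)) :
    Ideal (MvPolynomial ι k) :=
  Ideal.span {f | ∃ u v : ι →₀ ℕ, natVec u - natVec v ∈ L ∧
    f = monomial u (1 : k) - monomial v 1}

/-- `f` is a binomial `x^u - x^v` belonging to the lattice ideal `I_L`. -/
def IsLatticeBinomial (k : Type*) [Field k] {ι : Type*} (L : Submodule ℤ (ι → ℤ))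
    (f : MvPolynomial ι k) : Prop :=
  ∃ u v : ι →₀ ℕ, natVec u - natVec v ∈ L ∧ f = monomial u (1 : k) - monomial v 1

/-- The `I_L`-fiber of `u` : all exponent vectors `v` with `v - u ∈ L`. -/
def fiber {ι : Type*} (L : Submodule ℤ (ι → ℤ)) (u : ι →₀ ℕ) : Set (ι →₀ ℕ) :=
  {v | natVec v - natVec u ∈ L}

/-- `L⁺ = L ∩ ℕ^ι`. -/
def Lplus {ι : Type*} (L : Submodule ℤ (ι → ℤ)) : Set (ι → ℤ) :=
  {w | w ∈ L ∧ ∀ i, 0 ≤ w i}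

/-- `L_pure`, the subgroup of `L` generated by `L⁺`. -/
def Lpure {ι : Type*} (L : Submodule ℤ (ι → ℤ)) : Submodule ℤ (ι → ℤ) :=
  Submodule.span ℤ (Lplus L)

/-- `σ_L`, the union of the supports of elements of `L⁺`. -/
def sigmaL {ι : Type*} (L : Submodule ℤ (ι → ℤ)) : Set ι :=
  {i | ∃ w ∈ Lplus L, w i ≠ 0}

/-- `F̄ ≤_I Ḡ` : some translate of `F` is contained in `G`. -/
def fiberLE {ι : Type*} (F G : Set (ι →₀ ℕ)) : Prop :=
  ∃ t : ι →₀ ℕ, (fun v => t + v) '' F ⊆ G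

/-- `F ≡_I G` : equivalence of fibers. -/
def fiberEquiv {ι : Type*} (F G : Set (ι →₀ ℕ)) : Prop :=
  fiberLE F G ∧ fiberLE G F

/-- `F̄ <_I Ḡ`. -/
def fiberLT {ι : Type*} (F G : Set (ι →₀ ℕ)) : Prop :=
  fiberLE F G ∧ ¬ fiberEquiv F G

/-- The ideal `I_{<F̄}` generated by binomials of `I_L` whose fiber class is `<_I F̄`. -/
def idealLT (k : Type*) [Field k] {ι : Type*} (L : Submodule ℤ (ι → ℤ))
    (F : Set (ι →₀ ℕ)) : Ideal (MvPolynomial ι k) :=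
  Ideal.span {f | ∃ u v : ι →₀ ℕ, natVec u - natVec v ∈ L ∧
    f = monomial u (1 : k) - monomial v 1 ∧ fiberLT (fiber L u) F}

/-- The ideal `I_{≤F̄}` generated by binomials of `I_L` whose fiber class is `≤_I F̄`. -/
def idealLE (k : Type*) [Field k] {ι : Type*} (L : Submodule ℤ (ι → ℤ))
    (F : Set (ι →₀ ℕ)) : Ideal (MvPolynomial ι k) :=
  Ideal.span {f | ∃ u v : ι →₀ ℕ, natVec u - natVec v ∈ L ∧
    f = monomial u (1 : k) - monomial v 1 ∧ fiberLE (fiber L u) F}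

/-- `μ(I_L)` : the least cardinality of a binomial generating set of `I_L`. -/
def muIdeal (k : Type*) [Field k] {ι : Type*} (L : Submodule ℤ (ι → ℤ)) : ℕ :=
  sInf {m | ∃ S : Finset (MvPolynomial ι k), S.card = m ∧
    (∀ f ∈ S, IsLatticeBinomial k L f) ∧
    Ideal.span (S : Set (MvPolynomial ι k)) = latticeIdeal k L}

/-- A Markov basis of `I_L` : a binomial generating set of least cardinality `μ(I_L)`. -/
def IsMarkovBasis (k : Type*) [Field k] {ι : Type*} (L : Submodule ℤ (ι → ℤ))
    (S : Finset (MvPolynomial ι k)) : Prop :=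
  (∀ f ∈ S, IsLatticeBinomial k L f) ∧
  Ideal.span (S : Set (MvPolynomial ι k)) = latticeIdeal k L ∧
  S.card = muIdeal k L

/-- `u` is an `L`-primitive vector : `u ≠ 0`, `u ∈ L`, and whenever `q • u ∈ L` for
a rational `q`, then `q` is an integer. -/
def IsLPrimitive {ι : Type*} (L : Submodule ℤ (ι → ℤ)) (u : ι → ℤ) : Prop :=
  u ≠ 0 ∧ u ∈ L ∧ ∀ (q : ℚ) (w : ι → ℤ), w ∈ L →
    (∀ i, (w i : ℚ) = q * (u i : ℚ)) → ∃ m : ℤ, q = (m : ℚ)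

/-- Projection onto the coordinates in `σ_L`. -/
def projSigma {n : ℕ} (L : Submodule ℤ (Fin n → ℤ)) :
    (Fin n → ℤ) →ₗ[ℤ] ({i : Fin n // i ∈ sigmaL L} → ℤ) :=
  LinearMap.pi fun j => LinearMap.proj j.1

/-- Projection onto the coordinates outside `σ_L` (giving `u ↦ u^σ`). -/
def projCompl {n : ℕ} (L : Submodule ℤ (Fin n → ℤ)) :
    (Fin n → ℤ) →ₗ[ℤ] ({i : Fin n // i ∉ sigmaL L} → ℤ) :=
  LinearMap.pi fun j => LinearMap.proj j.1

/-- An indispensable binomial: it appears, up to a constant multiple, in every Markov basis. -/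
def IsIndispensableBinomial (k : Type*) [Field k] {ι : Type*} (L : Submodule ℤ (ι → ℤ))
    (f : MvPolynomial ι k) : Prop :=
  ∀ S : Finset (MvPolynomial ι k), IsMarkovBasis k L S → ∃ c : k, c ≠ 0 ∧ c • f ∈ S

/-- An indispensable monomial: every Markov basis contains a binomial having it as a term. -/
def IsIndispensableMonomial (k : Type*) [Field k] {ι : Type*} (L : Submodule ℤ (ι → ℤ))
    (u : ι →₀ ℕ) : Prop :=
  ∀ S : Finset (MvPolynomial ι k), IsMarkovBasis k L S → ∃ f ∈ S, ∃ v : ι →₀ ℕ,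
    f = monomial u (1 : k) - monomial v 1 ∨ f = monomial v (1 : k) - monomial u 1

/-!
If the binomials are triangular, then modulo the ideal `J` they generate every `x^(v i)` is a
unit, by induction on `i`: its variables divide earlier `x^(u i') ≡ x^(v i')`. With all these
monomials invertible, `x^a ≡ x^b (mod J)` whenever `a - b` is an integer combination of the
`u i - v i`, which holds for every `a - b ∈ L`.

For the converse, sending `x^a` to the class of `a` in the group algebra `k[ℤⁿ/L']` shows that a
binomial generated by binomials with exponent differences in `L'` has its own difference in `L'`.
So the vectors of a generating set span `L`, and being `r = rank L` of them they form a basis.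
The rest comes from setting to zero all variables outside a set `τ`: if every generator has either
both or neither of its terms supported on `τ`, this maps `I_L` into the ideal of the generators
supported on `τ`. Since `x^w - 1 ∈ I_L` for `w ∈ L⁺`, that forces `σ ⊆ τ`. Taking `τ` to avoid one
variable `x_j` with `j ∉ σ` shows, by linear independence, that no generator involves `x_j`. Taking
`τ` to be the variables of the `u`'s chosen so far shows that some remaining generator has a term
supported on `τ`; making it the next `v` builds the triangular order greedily.
-/

section NatVec

variable {ι : Type*}

@[simp]
lemma natVec_apply (a : ι →₀ ℕ) (i : ι) : natVec a i = a i := rfl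

lemma natVec_zero : natVec (0 : ι →₀ ℕ) = 0 := by
  ext; simp

lemma natVec_add (a b : ι →₀ ℕ) : natVec (a + b) = natVec a + natVec b := by
  ext; simp

lemma natVec_injective : Function.Injective (natVec : (ι →₀ ℕ) → ι → ℤ) := fun a b h => by
  ext i; simpa using congrFun h i

lemma exists_natVec_eq [Finite ι] {w : ι → ℤ} (hw : ∀ i, 0 ≤ w i) :
    ∃ a : ι →₀ ℕ, natVec a = w :=
  ⟨Finsupp.equivFunOnFinite.symm fun i => (w i).toNat, by ext i; simp [hw i]⟩

lemma exists_natVec_sub_eq [Finite ι] (w : ι → ℤ) : ∃ a b : ι →₀ ℕ, natVec a - natVec b = w :=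
  ⟨Finsupp.equivFunOnFinite.symm fun i => (w i).toNat,
    Finsupp.equivFunOnFinite.symm fun i => (-w i).toNat, by ext i; simp⟩

end NatVec

def binomialIdeal (k : Type*) [CommRing k] {ι κ : Type*} (u v : κ → ι →₀ ℕ) :
    Ideal (MvPolynomial ι k) :=
  Ideal.span (Set.range fun i => monomial (u i) 1 - monomial (v i) 1)

section BinomialIdeal

variable {k : Type*} [CommRing k] {ι κ : Type*}

lemma monomial_sub_monomial_mem_binomialIdeal (u v : κ → ι →₀ ℕ) (i : κ) :
    monomial (u i) (1 : k) - monomial (v i) 1 ∈ binomialIdeal k u v :=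
  Ideal.subset_span ⟨i, rfl⟩

lemma span_eq_binomialIdeal {S : Finset (MvPolynomial ι k)}
    (e : κ ≃ {f // f ∈ S}) {u v : κ → ι →₀ ℕ}
    (he : ∀ i, (e i).1 = monomial (u i) (1 : k) - monomial (v i) 1 ∨
      (e i).1 = monomial (v i) (1 : k) - monomial (u i) 1) :
    Ideal.span (S : Set (MvPolynomial ι k)) =
      binomialIdeal k u v := by
  have hS : (S : Set (MvPolynomial ι k)) = Set.range fun i => (e i).1 :=
    ((e.surjective.range_comp Subtype.val).trans Subtype.range_coe).symm
  have hsingle : ∀ i, Ideal.span {(e i).1} =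
      Ideal.span {monomial (u i) (1 : k) - monomial (v i) 1} := fun i => by
    rcases he i with h | h
    · rw [h]
    · rw [h, ← neg_sub, Ideal.span_singleton_neg]
  rw [hS, binomialIdeal, ← Set.iUnion_singleton_eq_range, ← Set.iUnion_singleton_eq_range, Ideal.span_iUnion,
    Ideal.span_iUnion, iSup_congr hsingle]

end BinomialIdeal

section LatticeIdeal

variable {k : Type*} [Field k] {ι κ : Type*} {L : Submodule ℤ (ι → ℤ)}

def latticeClass (L : Submodule ℤ (ι → ℤ)) : (ι →₀ ℕ) →+ (ι → ℤ) ⧸ L where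
  toFun a := Submodule.Quotient.mk (natVec a)
  map_zero' := by simp [natVec_zero]
  map_add' a b := by simp [natVec_add]

lemma mapDomainRingHom_latticeClass_monomial (a : ι →₀ ℕ) :
    AddMonoidAlgebra.mapDomainRingHom k (latticeClass L) (monomial a 1) =
      AddMonoidAlgebra.single (latticeClass L a) 1 :=
  AddMonoidAlgebra.mapDomain_single

lemma latticeIdeal_le_ker_mapDomainRingHom :
    latticeIdeal k L ≤ RingHom.ker (AddMonoidAlgebra.mapDomainRingHom k (latticeClass L)) := by
  rw [latticeIdeal, Ideal.span_le]
  rintro _ ⟨a, b, hab, rfl⟩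
  have hclass : latticeClass L a = latticeClass L b := (Submodule.Quotient.eq L).mpr hab
  rw [SetLike.mem_coe, RingHom.mem_ker, map_sub, mapDomainRingHom_latticeClass_monomial,
    mapDomainRingHom_latticeClass_monomial, hclass, sub_self]

theorem monomial_sub_monomial_mem_latticeIdeal_iff {a b : ι →₀ ℕ} :
    monomial a (1 : k) - monomial b 1 ∈ latticeIdeal k L ↔ natVec a - natVec b ∈ L := by
  refine ⟨fun h => ?_, fun h => Ideal.subset_span ⟨a, b, h, rfl⟩⟩
  have hker := latticeIdeal_le_ker_mapDomainRingHom h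
  rw [RingHom.mem_ker, map_sub, mapDomainRingHom_latticeClass_monomial,
    mapDomainRingHom_latticeClass_monomial, sub_eq_zero, AddMonoidAlgebra.single_inj] at hker
  obtain ⟨hclass, -⟩ | ⟨h10, -⟩ := hker
  · exact (Submodule.Quotient.eq L).mp hclass
  · exact absurd h10 one_ne_zero

theorem one_notMem_latticeIdeal : (1 : MvPolynomial ι k) ∉ latticeIdeal k L := fun h =>
  zero_ne_one <| (RingHom.mem_ker.mp (latticeIdeal_le_ker_mapDomainRingHom h)).symm.trans
    (map_one _)

lemma span_image_binomial_le_latticeIdeal (u v : κ → ι →₀ ℕ) (T : Set κ) :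
    Ideal.span ((fun i => monomial (u i) (1 : k) - monomial (v i) 1) '' T) ≤
      latticeIdeal k (Submodule.span ℤ ((fun i => natVec (u i) - natVec (v i)) '' T)) :=
  Ideal.span_le.mpr <| by
    rintro _ ⟨i, hi, rfl⟩
    exact monomial_sub_monomial_mem_latticeIdeal_iff.mpr (Submodule.subset_span ⟨i, hi, rfl⟩)

lemma natVec_sub_mem_of_span_eq_latticeIdeal {u v : κ → ι →₀ ℕ}
    (hgen : binomialIdeal k u v = latticeIdeal k L) (i : κ) :
    natVec (u i) - natVec (v i) ∈ L := by
  rw [← monomial_sub_monomial_mem_latticeIdeal_iff (k := k), ← hgen]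
  exact monomial_sub_monomial_mem_binomialIdeal u v i

theorem span_natVec_sub_eq_of_span_eq_latticeIdeal [Finite ι] {u v : κ → ι →₀ ℕ}
    (hgen : binomialIdeal k u v = latticeIdeal k L) :
    Submodule.span ℤ (Set.range fun i => natVec (u i) - natVec (v i)) = L := by
  refine le_antisymm (Submodule.span_le.mpr ?_) fun w hw => ?_
  · rintro _ ⟨i, rfl⟩
    exact natVec_sub_mem_of_span_eq_latticeIdeal hgen i
  · obtain ⟨a, b, rfl⟩ := exists_natVec_sub_eq w
    have hab := monomial_sub_monomial_mem_latticeIdeal_iff (k := k).mpr hw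
    rw [← hgen, binomialIdeal, ← Set.image_univ] at hab
    rw [← Set.image_univ]
    exact monomial_sub_monomial_mem_latticeIdeal_iff.mp
      (span_image_binomial_le_latticeIdeal u v Set.univ hab)

theorem linearIndependent_of_span_eq_latticeIdeal [Finite ι] [Fintype κ] {u v : κ → ι →₀ ℕ}
    (hgen : binomialIdeal k u v = latticeIdeal k L)
    (hcard : Fintype.card κ = Module.finrank ℤ L) :
    LinearIndependent ℤ fun i => natVec (u i) - natVec (v i) := by
  rw [linearIndependent_iff_card_eq_finrank_span, Set.finrank,
    span_natVec_sub_eq_of_span_eq_latticeIdeal hgen, hcard]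

end LatticeIdeal

section Triangular

variable {k : Type*} [CommRing k] {ι κ : Type*}

/-- Condition (3) of the theorem: `supp v_i ⊆ ⋃_{i' < i} supp u_{i'}`. -/
def IsTriangular [LT κ] (u v : κ → ι →₀ ℕ) : Prop :=
  ∀ i j, v i j ≠ 0 → ∃ i' < i, u i' j ≠ 0

lemma IsTriangular.eq_zero_of_isMin [Preorder κ] {u v : κ → ι →₀ ℕ} (htri : IsTriangular u v)
    {i : κ} (hi : IsMin i) : v i = 0 := by
  ext j
  by_contra hj
  obtain ⟨i', hi', -⟩ := htri i j hj
  exact hi.not_lt hi'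

lemma isUnit_mk_monomial_iff {J : Ideal (MvPolynomial ι k)} {a : ι →₀ ℕ} :
    IsUnit (Ideal.Quotient.mk J (monomial a 1)) ↔
      ∀ j, a j ≠ 0 → IsUnit (Ideal.Quotient.mk J (X j)) := by
  rw [monomial_eq, C_1, one_mul, Finsupp.prod, map_prod, IsUnit.prod_iff]
  refine forall_congr' fun j => ?_
  rw [Finsupp.mem_support_iff]
  refine imp_congr_right fun hj => ?_
  rw [map_pow, isUnit_pow_iff hj]

lemma IsTriangular.isUnit_mk_monomial [Preorder κ] [WellFoundedLT κ] {u v : κ → ι →₀ ℕ}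
    (htri : IsTriangular u v) {J : Ideal (MvPolynomial ι k)}
    (hJ : ∀ i, monomial (u i) (1 : k) - monomial (v i) 1 ∈ J) (i : κ) :
    IsUnit (Ideal.Quotient.mk J (monomial (v i) 1)) := by
  induction i using WellFoundedLT.induction with
  | _ i ih =>
    refine isUnit_mk_monomial_iff.mpr fun j hj => ?_
    obtain ⟨i', hi', hu⟩ := htri i j hj
    have hunit := ih i' hi'
    rw [← Ideal.Quotient.mk_eq_mk_iff_sub_mem _ _ |>.mpr (hJ i')] at hunit
    exact isUnit_mk_monomial_iff.mp hunit j hu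

/-- The differences `p - q` with `x^p ≡ x^q` and `x^q` invertible modulo `J` form a group. -/
lemma monomial_sub_monomial_mem_of_natVec_sub_mem_span {J : Ideal (MvPolynomial ι k)}
    {u v : κ → ι →₀ ℕ} (hJ : ∀ i, monomial (u i) (1 : k) - monomial (v i) 1 ∈ J)
    (hunit : ∀ i, IsUnit (Ideal.Quotient.mk J (monomial (v i) 1))) {a b : ι →₀ ℕ}
    (hab : natVec a - natVec b ∈
      Submodule.span ℤ (Set.range fun i => natVec (u i) - natVec (v i))) :
    monomial a (1 : k) - monomial b 1 ∈ J := by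
  set Q : (ι →₀ ℕ) → MvPolynomial ι k ⧸ J := fun m => Ideal.Quotient.mk J (monomial m 1)
  have hQ_add : ∀ m m', Q (m + m') = Q m * Q m' := fun m m' => by
    simp only [Q, ← map_mul, monomial_mul, one_mul]
  let G : AddSubgroup (ι → ℤ) :=
    { carrier := {w | ∃ p q, natVec p - natVec q = w ∧ Q p = Q q ∧ IsUnit (Q q)}
      zero_mem' := ⟨0, 0, sub_self _, rfl, by simp [Q]⟩
      add_mem' := by
        rintro _ _ ⟨p, q, rfl, hpq, hq⟩ ⟨p', q', rfl, hpq', hq'⟩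
        refine ⟨p + p', q + q', by simp only [natVec_add]; abel, ?_, ?_⟩
        · rw [hQ_add, hQ_add, hpq, hpq']
        · rw [hQ_add]; exact hq.mul hq'
      neg_mem' := by
        rintro _ ⟨p, q, rfl, hpq, hq⟩
        exact ⟨q, p, (neg_sub _ _).symm, hpq.symm, hpq ▸ hq⟩ }
  have hspan : Submodule.span ℤ (Set.range fun i => natVec (u i) - natVec (v i)) ≤
      G.toIntSubmodule := by
    rw [Submodule.span_le]
    rintro _ ⟨i, rfl⟩
    exact ⟨u i, v i, rfl, Ideal.Quotient.mk_eq_mk_iff_sub_mem _ _ |>.mpr (hJ i), hunit i⟩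
  obtain ⟨p, q, hpq, hQpq, hq⟩ := hspan hab
  have hexp : a + q = b + p := natVec_injective <| by
    rw [natVec_add, natVec_add]; linear_combination -hpq
  refine (Ideal.Quotient.mk_eq_mk_iff_sub_mem _ _).mp <| hq.mul_right_cancel ?_
  rw [← hQ_add, hexp, hQ_add, hQpq]

theorem IsTriangular.span_eq_latticeIdeal {k : Type*} [Field k] [Preorder κ] [WellFoundedLT κ]
    {L : Submodule ℤ (ι → ℤ)} {u v : κ → ι →₀ ℕ} (htri : IsTriangular u v)
    (hspan : Submodule.span ℤ (Set.range fun i => natVec (u i) - natVec (v i)) = L) :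
    binomialIdeal k u v = latticeIdeal k L := by
  have hJ := monomial_sub_monomial_mem_binomialIdeal (k := k) u v
  refine le_antisymm (Ideal.span_le.mpr ?_) (Ideal.span_le.mpr ?_)
  · rintro _ ⟨i, rfl⟩
    exact monomial_sub_monomial_mem_latticeIdeal_iff.mpr (hspan ▸ Submodule.subset_span ⟨i, rfl⟩)
  · rintro _ ⟨a, b, hab, rfl⟩
    exact monomial_sub_monomial_mem_of_natVec_sub_mem_span hJ (htri.isUnit_mk_monomial hJ)
      (hspan ▸ hab)

end Triangular

section KillOutside

variable (k : Type*) [CommSemiring k] {ι : Type*}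

def killOutside (τ : Set ι) : MvPolynomial ι k →ₐ[k] MvPolynomial ι k :=
  aeval (τ.indicator X)

variable {k} {τ : Set ι} {a : ι →₀ ℕ}

lemma killOutside_monomial_of_subset (h : {j | a j ≠ 0} ⊆ τ) :
    killOutside k τ (monomial a 1) = monomial a 1 := by
  rw [killOutside, aeval_monomial, map_one, one_mul, monomial_eq, C_1, one_mul]
  refine Finset.prod_congr rfl fun j hj => ?_
  dsimp only
  rw [Set.indicator_of_mem (h (Finsupp.mem_support_iff.mp hj))]

lemma killOutside_monomial_of_not_subset (h : ¬ {j | a j ≠ 0} ⊆ τ) :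
    killOutside k τ (monomial a 1) = 0 := by
  obtain ⟨j, hja, hjτ⟩ := Set.not_subset.mp h
  rw [killOutside, aeval_monomial, map_one, one_mul]
  refine Finset.prod_eq_zero (Finsupp.mem_support_iff.mpr hja) ?_
  dsimp only
  rw [Set.indicator_of_notMem hjτ, zero_pow hja]

end KillOutside

section Generators

variable {k : Type*} [Field k] {ι κ : Type*} {L : Submodule ℤ (ι → ℤ)} {u v : κ → ι →₀ ℕ}

lemma map_killOutside_latticeIdeal_le {τ : Set ι}
    (hgen : binomialIdeal k u v = latticeIdeal k L)
    (hτ : ∀ i, {j | u i j ≠ 0} ⊆ τ ↔ {j | v i j ≠ 0} ⊆ τ) :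
    (latticeIdeal k L).map (killOutside k τ) ≤
      Ideal.span ((fun i => monomial (u i) (1 : k) - monomial (v i) 1) ''
        {i | {j | u i j ≠ 0} ⊆ τ}) := by
  rw [← hgen, binomialIdeal, Ideal.map_span, Ideal.span_le]
  rintro _ ⟨_, ⟨i, rfl⟩, rfl⟩
  by_cases hi : {j | u i j ≠ 0} ⊆ τ
  · rw [map_sub, killOutside_monomial_of_subset hi,
      killOutside_monomial_of_subset ((hτ i).mp hi)]
    exact Ideal.subset_span ⟨i, hi, rfl⟩
  · rw [map_sub, killOutside_monomial_of_not_subset hi,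
      killOutside_monomial_of_not_subset (mt (hτ i).mpr hi), sub_zero]
    exact Ideal.zero_mem _

/-- Killing the variables outside `τ` sends `x^w - 1` to `-1` for `w ∈ L⁺` not supported in `τ`,
and `-1 ∉ I_L`. -/
theorem sigmaL_subset_of_support_subset_iff [Finite ι] {τ : Set ι}
    (hgen : binomialIdeal k u v = latticeIdeal k L)
    (hτ : ∀ i, {j | u i j ≠ 0} ⊆ τ ↔ {j | v i j ≠ 0} ⊆ τ) :
    sigmaL L ⊆ τ := by
  rintro j ⟨w, ⟨hwL, hw⟩, hwj⟩
  by_contra hjτ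
  obtain ⟨a, rfl⟩ := exists_natVec_eq hw
  have hmem : monomial a (1 : k) - monomial 0 1 ∈ latticeIdeal k L :=
    monomial_sub_monomial_mem_latticeIdeal_iff.mpr (by rwa [natVec_zero, sub_zero])
  have hkill := map_killOutside_latticeIdeal_le hgen hτ (Ideal.mem_map_of_mem _ hmem)
  rw [map_sub, killOutside_monomial_of_not_subset fun h => hjτ (h (by simpa using hwj)),
    killOutside_monomial_of_subset (by simp), zero_sub] at hkill
  have hle := (Ideal.span_mono (Set.image_subset_range _ _)).trans hgen.le hkill
  rw [neg_mem_iff, monomial_zero', C_1] at hle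
  exact one_notMem_latticeIdeal hle

theorem natVec_sub_mem_span_of_support_subset {τ : Set ι}
    (hgen : binomialIdeal k u v = latticeIdeal k L)
    (hτ : ∀ i, {j | u i j ≠ 0} ⊆ τ ↔ {j | v i j ≠ 0} ⊆ τ) {c d : ι →₀ ℕ}
    (hc : {j | c j ≠ 0} ⊆ τ) (hd : {j | d j ≠ 0} ⊆ τ) (hcd : natVec c - natVec d ∈ L) :
    natVec c - natVec d ∈ Submodule.span ℤ
      ((fun i => natVec (u i) - natVec (v i)) '' {i | {j | u i j ≠ 0} ⊆ τ}) := by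
  have hmem := Ideal.mem_map_of_mem (killOutside k τ)
    (monomial_sub_monomial_mem_latticeIdeal_iff (k := k).mpr hcd)
  rw [map_sub, killOutside_monomial_of_subset hc, killOutside_monomial_of_subset hd] at hmem
  exact monomial_sub_monomial_mem_latticeIdeal_iff.mp
    (span_image_binomial_le_latticeIdeal u v _ (map_killOutside_latticeIdeal_le hgen hτ hmem))

lemma apply_eq_of_natVec_sub_mem (hpure : L = Lpure L) {a b : ι →₀ ℕ}
    (hab : natVec a - natVec b ∈ L) {j : ι} (hj : j ∉ sigmaL L) : a j = b j := by
  have hle : Lpure L ≤ LinearMap.ker (LinearMap.proj j) :=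
    Submodule.span_le.mpr fun x hx => not_not.mp fun hxj => hj ⟨x, hx, hxj⟩
  have hj0 : (natVec a - natVec b) j = 0 := hle (hpure ▸ hab)
  simpa [sub_eq_zero] using hj0

/-- Outside `σ_L` the two terms of a generator agree, so dividing out the common power of `x_j`
leaves a lattice binomial free of `x_j`; killing `x_j` would then express the generator's vector
through the others. -/
theorem support_subset_sigmaL [Finite ι] (hpure : L = Lpure L)
    (hgen : binomialIdeal k u v = latticeIdeal k L)
    (hli : LinearIndependent ℤ fun i => natVec (u i) - natVec (v i)) (i : κ) :
    {j | u i j ≠ 0} ⊆ sigmaL L ∧ {j | v i j ≠ 0} ⊆ sigmaL L := by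
  have hvecL := natVec_sub_mem_of_span_eq_latticeIdeal hgen
  have heq : ∀ i j, j ∉ sigmaL L → u i j = v i j := fun i j hj =>
    apply_eq_of_natVec_sub_mem hpure (hvecL i) hj
  suffices hu : {j | u i j ≠ 0} ⊆ sigmaL L from
    ⟨hu, fun j hj => not_not.mp fun hjσ => hjσ (hu (show u i j ≠ 0 from heq i j hjσ ▸ hj))⟩
  intro j hij
  by_contra hjσ
  have hτ : ∀ i, {j' | u i j' ≠ 0} ⊆ {j}ᶜ ↔ {j' | v i j' ≠ 0} ⊆ {j}ᶜ := fun i => by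
    simp [Set.subset_compl_singleton_iff, heq i j hjσ]
  have hvec : natVec ((u i).erase j) - natVec ((v i).erase j) = natVec (u i) - natVec (v i) := by
    ext j'
    by_cases hj' : j' = j
    · simp [hj', heq i j hjσ]
    · simp [Finsupp.erase_ne hj']
  have hmem := natVec_sub_mem_span_of_support_subset hgen hτ (c := (u i).erase j)
    (d := (v i).erase j) (by simp [Set.subset_compl_singleton_iff])
    (by simp [Set.subset_compl_singleton_iff])
    (hvec ▸ hvecL i)
  rw [hvec] at hmem
  exact hli.notMem_span_image (by simpa [Set.subset_compl_singleton_iff] using hij) hmem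

/-- Otherwise every generator outside `T` has both terms involving a variable outside `τ`, which
forces `σ_L ⊆ τ`; but generators live on `σ_L`. -/
theorem exists_notMem_support_subset [Finite ι] (hpure : L = Lpure L)
    (hgen : binomialIdeal k u v = latticeIdeal k L)
    (hli : LinearIndependent ℤ fun i => natVec (u i) - natVec (v i)) {T : Set κ} {i₀ : κ}
    (hi₀ : i₀ ∉ T) (τ : Set ι) (hT : ∀ i ∈ T, {j | u i j ≠ 0} ⊆ τ ∧ {j | v i j ≠ 0} ⊆ τ) :
    ∃ i ∉ T, {j | u i j ≠ 0} ⊆ τ ∨ {j | v i j ≠ 0} ⊆ τ := by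
  by_contra! h
  have hσ : sigmaL L ⊆ τ := sigmaL_subset_of_support_subset_iff hgen fun i => by
    by_cases hi : i ∈ T
    · exact iff_of_true (hT i hi).1 (hT i hi).2
    · exact iff_of_false (h i hi).1 (h i hi).2
  exact (h i₀ hi₀).1 ((support_subset_sigmaL hpure hgen hli i₀).1.trans hσ)

end Generators

section Enumeration

variable {ι : Type*}

lemma IsTriangular.snoc {t : ℕ} {p q : Fin t → ι →₀ ℕ} (htri : IsTriangular p q)
    {a b : ι →₀ ℕ} (hb : ∀ j, b j ≠ 0 → ∃ i, p i j ≠ 0) :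
    IsTriangular (Fin.snoc p a : Fin (t + 1) → ι →₀ ℕ) (Fin.snoc q b) := by
  intro i j
  induction i using Fin.lastCases with
  | last =>
    simp only [Fin.snoc_last]
    intro hj
    obtain ⟨i, hi⟩ := hb j hj
    exact ⟨i.castSucc, Fin.castSucc_lt_last i, by simpa using hi⟩
  | cast i =>
    simp only [Fin.snoc_castSucc]
    intro hj
    obtain ⟨i', hi', hu⟩ := htri i j hj
    exact ⟨i'.castSucc, Fin.castSucc_lt_castSucc_iff.mpr hi', by simpa using hu⟩

variable {k : Type*} [Field k] {κ : Type*} {L : Submodule ℤ (ι → ℤ)} {u v : κ → ι →₀ ℕ}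

/-- Greedy: the next generator is one with a term supported on the variables of the earlier `u`'s,
and that term becomes its `v`. -/
theorem exists_triangular_enumeration [Finite ι] [Fintype κ] {m : ℕ} (hpure : L = Lpure L)
    (hgen : binomialIdeal k u v = latticeIdeal k L)
    (hm : Fintype.card κ = m) (hrank : Module.finrank ℤ L = m) :
    ∃ (e : Fin m ≃ κ) (p q : Fin m → ι →₀ ℕ),
      (∀ t, p t = u (e t) ∧ q t = v (e t) ∨ p t = v (e t) ∧ q t = u (e t)) ∧
      IsTriangular p q := by
  have hli := linearIndependent_of_span_eq_latticeIdeal hgen (hm.trans hrank.symm)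
  suffices h : ∀ t ≤ m, ∃ f : Fin t → κ, Function.Injective f ∧ ∃ p q : Fin t → ι →₀ ℕ,
      (∀ s, p s = u (f s) ∧ q s = v (f s) ∨ p s = v (f s) ∧ q s = u (f s)) ∧
      IsTriangular p q by
    obtain ⟨f, hf, p, q, hpq, htri⟩ := h m le_rfl
    have hbij : Function.Bijective f :=
      (Fintype.bijective_iff_injective_and_card f).mpr ⟨hf, by simp [hm]⟩
    exact ⟨Equiv.ofBijective f hbij, p, q, hpq, htri⟩
  intro t ht
  induction t with
  | zero => exact ⟨Fin.elim0, fun s => s.elim0, Fin.elim0, Fin.elim0, fun s => s.elim0,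
      fun s => s.elim0⟩
  | succ t ih =>
    obtain ⟨f, hf, p, q, hpq, htri⟩ := ih (by omega)
    obtain ⟨i₀, hi₀⟩ : ∃ i, i ∉ Set.range f := by
      by_contra! h
      have := Fintype.card_le_of_surjective f h
      simp only [Fintype.card_fin] at this
      omega
    set τ := {j | ∃ s, p s j ≠ 0}
    have hchain : ∀ i ∈ Set.range f, {j | u i j ≠ 0} ⊆ τ ∧ {j | v i j ≠ 0} ⊆ τ := by
      rintro _ ⟨s, rfl⟩
      have hp : {j | p s j ≠ 0} ⊆ τ := fun j hj => ⟨s, hj⟩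
      have hq : {j | q s j ≠ 0} ⊆ τ := fun j hj =>
        let ⟨s', _, hs'⟩ := htri s j hj; ⟨s', hs'⟩
      rcases hpq s with ⟨hpu, hqv⟩ | ⟨hpv, hqu⟩
      · exact ⟨hpu ▸ hp, hqv ▸ hq⟩
      · exact ⟨hqu ▸ hq, hpv ▸ hp⟩
    obtain ⟨i, hi, hiτ⟩ := exists_notMem_support_subset hpure hgen hli hi₀ τ hchain
    suffices h : ∃ a b, (a = u i ∧ b = v i ∨ a = v i ∧ b = u i) ∧ {j | b j ≠ 0} ⊆ τ by
      obtain ⟨a, b, hab, hb⟩ := h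
      refine ⟨Fin.snoc f i, Fin.snoc_injective_of_injective hf hi, Fin.snoc p a, Fin.snoc q b,
        fun s => ?_, htri.snoc hb⟩
      induction s using Fin.lastCases with
      | last => simpa using hab
      | cast s => simpa using hpq s
    rcases hiτ with hu | hv
    · exact ⟨v i, u i, Or.inr ⟨rfl, rfl⟩, hu⟩
    · exact ⟨u i, v i, Or.inl ⟨rfl, rfl⟩, hv⟩

end Enumeration

/-- characterization of the sets of `r` binomials generating the lattice
ideal of a pure lattice `L = L_pure` of rank `r`. -/
theorem stmt12 (k : Type*) [Field k] {n r : ℕ} (L : Submodule ℤ (Fin n → ℤ))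
    (hpure : L = Lpure L) (hrank : Module.finrank ℤ ↥L = r)
    (S : Finset (MvPolynomial (Fin n) k)) (hcard : S.card = r)
    (hbin : ∀ f ∈ S, IsLatticeBinomial k L f) :
    Ideal.span (S : Set (MvPolynomial (Fin n) k)) = latticeIdeal k L ↔
    ∃ u v : Fin r → (Fin n →₀ ℕ),
      (∃ e : Fin r ≃ {f : MvPolynomial (Fin n) k // f ∈ S}, ∀ i : Fin r,
        (e i).1 = monomial (u i) (1 : k) - monomial (v i) 1 ∨
        (e i).1 = monomial (v i) (1 : k) - monomial (u i) 1) ∧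
      (LinearIndependent ℤ (fun i : Fin r => natVec (u i) - natVec (v i)) ∧
        Submodule.span ℤ (Set.range fun i : Fin r => natVec (u i) - natVec (v i)) = L) ∧
      (∀ i : Fin r, {j | u i j ≠ 0} ⊆ sigmaL L ∧ {j | v i j ≠ 0} ⊆ sigmaL L) ∧
      ((∀ h : 0 < r, v ⟨0, h⟩ = 0) ∧
        ∀ i : Fin r, ∀ j : Fin n, v i j ≠ 0 → ∃ i' : Fin r, i' < i ∧ u i' j ≠ 0) := by
  constructor
  · intro hgen
    choose a b _ hab using fun f : {f // f ∈ S} => hbin f f.2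
    have hgen_ab := (span_eq_binomialIdeal (Equiv.refl _) fun f => Or.inl (hab f)).symm.trans
      hgen
    obtain ⟨e, u, v, horient, htri⟩ :=
      exists_triangular_enumeration hpure hgen_ab (by simp [hcard]) hrank
    have he : ∀ i, (e i).1 = monomial (u i) (1 : k) - monomial (v i) 1 ∨
        (e i).1 = monomial (v i) (1 : k) - monomial (u i) 1 := fun i => by
      rcases horient i with ⟨hu, hv⟩ | ⟨hu, hv⟩ <;> simp [hab, hu, hv]
    have hgen' := (span_eq_binomialIdeal e he).symm.trans hgen
    have hli := linearIndependent_of_span_eq_latticeIdeal hgen' (by simp [hrank])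
    refine ⟨u, v, ⟨e, he⟩, ⟨hli, span_natVec_sub_eq_of_span_eq_latticeIdeal hgen'⟩,
      support_subset_sigmaL hpure hgen' hli,
      fun _ => htri.eq_zero_of_isMin fun _ _ => Nat.zero_le _, htri⟩
  · rintro ⟨u, v, ⟨e, he⟩, ⟨-, hspan⟩, -, -, htri⟩
    rw [span_eq_binomialIdeal e he]
    exact IsTriangular.span_eq_latticeIdeal htri hspan
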